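/- Let a₊, a₋ ∈ (0,2)\{1}, let C₊, C₋, λ₊, λ₋, μ₊, μ₋ > 0, T > 0 and α ∈ (−1,1), and set p = (1−α)/2, q = (1+α)/2. Define r : ℝ → ℝ by r(x) = exp(−(λ₊−μ₊)x²/2) for x > 0 and r(x) = exp(−(λ₋−μ₋)x²/2) for x < 0, and let ℓ̃ be the RDTS Lévy density with parameters (a₊, a₋, C₊, C₋, μ₊, μ₋). Then (4T/(1−α²))·∫_ℝ (p·r(x) + q − r(x)^p)·ℓ̃(x) dx = (4T/(1−α²))·[ 2^{−1−a₊/2}·C₊·Γ(−a₊/2)·(p·λ₊^{a₊/2} + q·μ₊^{a₊/2} − (pλ₊+qμ₊)^{a₊/2}) + 2^{−1−a₋/2}·C₋·Γ(−a₋/2)·(p·λ₋^{a₋/2} + q·μ₋^{a₋/2} − (pλ₋+qμ₋)^{a₋/2}) ]. -/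

import Mathlib

/-!
On each half-line the tilt `r ^ p` turns the tempering factor `exp (-(μ x² / 2))` into
`exp (-((p λ + q μ) x² / 2))`, so the integrand is `C (p e_λ + q e_μ - e_{pλ+qμ}) x^(-a-1)` with
`e_θ x = exp (-(θ x² / 2))`. Since `p + q = 1` this is the same combination of the compensated
kernels `(e_θ - 1) x^(-a-1)`, which are integrable for `0 < a < 2`. Integrating such a kernel by
parts against `x^(-a)` leaves the Gaussian moment `∫ x^(1-a) e_θ`, a Gamma value, and
`Γ(1 - a/2) = -(a/2) Γ(-a/2)` gives `∫₀^∞ (e_θ - 1) x^(-a-1) dx = 2^(-1-a/2) Γ(-a/2) θ^(a/2)`.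
-/

open MeasureTheory Real Set

/-- The RDTS (rapidly-decreasing tempered stable) Lévy density with parameters
`(a₊, a₋, C₊, C₋, θ₊, θ₋)`. -/
noncomputable def rdtsDensity (ap am Cp Cm tp tm : ℝ) (x : ℝ) : ℝ :=
  if 0 < x then Cp * exp (-(tp * x ^ 2 / 2)) * x ^ (-ap - 1)
  else if x < 0 then Cm * exp (-(tm * x ^ 2 / 2)) * |x| ^ (-am - 1)
  else 0

open Filter Topology

lemma abs_exp_neg_sub_one_le {u : ℝ} (hu : 0 ≤ u) : |exp (-u) - 1| ≤ u := by
  rw [abs_of_nonpos (by simpa using hu)]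
  linarith [add_one_le_exp (-u)]

lemma abs_exp_neg_sub_one_le_one {u : ℝ} (hu : 0 ≤ u) : |exp (-u) - 1| ≤ 1 := by
  rw [abs_of_nonpos (by simpa using hu)]
  linarith [exp_pos (-u)]

section Kernel

variable {a θ : ℝ}

lemma abs_exp_neg_sq_sub_one_mul_rpow_le {x : ℝ} (hθ : 0 ≤ θ) (hx : 0 < x) (b : ℝ) :
    |(exp (-(θ * x ^ 2 / 2)) - 1) * x ^ b| ≤ θ / 2 * x ^ (b + 2) := by
  rw [abs_mul, abs_of_pos (rpow_pos_of_pos hx _), rpow_add hx, rpow_two]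
  calc |exp (-(θ * x ^ 2 / 2)) - 1| * x ^ b
      ≤ θ * x ^ 2 / 2 * x ^ b := by gcongr; exact abs_exp_neg_sub_one_le (by positivity)
    _ = θ / 2 * (x ^ b * x ^ 2) := by ring

lemma abs_exp_neg_sq_sub_one_mul_rpow_le_rpow {x : ℝ} (hθ : 0 ≤ θ) (hx : 0 < x) (b : ℝ) :
    |(exp (-(θ * x ^ 2 / 2)) - 1) * x ^ b| ≤ x ^ b := by
  rw [abs_mul, abs_of_pos (rpow_pos_of_pos hx _)]
  exact mul_le_of_le_one_left (rpow_pos_of_pos hx _).le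
    (abs_exp_neg_sub_one_le_one (by positivity))

noncomputable def gaussTemperedKernel (a θ x : ℝ) : ℝ :=
  (exp (-(θ * x ^ 2 / 2)) - 1) * x ^ (-a - 1)

lemma integrableOn_gaussTemperedKernel (ha0 : 0 < a) (ha2 : a < 2) (hθ : 0 ≤ θ) :
    IntegrableOn (gaussTemperedKernel a θ) (Ioi 0) := by
  have hmeas : ∀ s : Set ℝ, AEStronglyMeasurable (gaussTemperedKernel a θ) (volume.restrict s) :=
    fun s => by unfold gaussTemperedKernel; fun_prop
  rw [← Ioc_union_Ioi_eq_Ioi zero_le_one, integrableOn_union]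
  constructor
  · have hbound : IntegrableOn (fun x : ℝ => θ / 2 * x ^ (-a - 1 + 2)) (Ioc 0 1) := by
      rw [← intervalIntegrable_iff_integrableOn_Ioc_of_le zero_le_one]
      exact (intervalIntegral.intervalIntegrable_rpow' (r := -a - 1 + 2) (by linarith)).const_mul _
    refine hbound.mono' (hmeas _) ?_
    filter_upwards [ae_restrict_mem measurableSet_Ioc] with x hx
    exact abs_exp_neg_sq_sub_one_mul_rpow_le hθ hx.1 _
  · refine (integrableOn_Ioi_rpow_of_lt (a := -a - 1) (by linarith) one_pos).mono' (hmeas _) ?_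
    filter_upwards [ae_restrict_mem measurableSet_Ioi] with x hx
    exact abs_exp_neg_sq_sub_one_mul_rpow_le_rpow hθ (one_pos.trans hx) _

lemma tendsto_exp_neg_sq_sub_one_mul_rpow_nhdsGT_zero (ha2 : a < 2) (hθ : 0 ≤ θ) :
    Tendsto (fun x : ℝ => (exp (-(θ * x ^ 2 / 2)) - 1) * x ^ (-a)) (𝓝[>] 0) (𝓝 0) := by
  have hlim : Tendsto (fun x : ℝ => θ / 2 * x ^ (-a + 2)) (𝓝[>] 0) (𝓝 0) := by
    have : Tendsto (fun x : ℝ => θ / 2 * x ^ (-a + 2)) (𝓝[>] 0) (𝓝 (θ / 2 * 0 ^ (-a + 2))) :=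
      ((continuousAt_rpow_const 0 (-a + 2) (Or.inr (by linarith))).tendsto.const_mul
        (θ / 2)).mono_left nhdsWithin_le_nhds
    rwa [zero_rpow (by linarith), mul_zero] at this
  refine squeeze_zero_norm' ?_ hlim
  filter_upwards [self_mem_nhdsWithin] with x (hx : 0 < x)
  exact abs_exp_neg_sq_sub_one_mul_rpow_le hθ hx _

lemma tendsto_exp_neg_sq_sub_one_mul_rpow_atTop (ha0 : 0 < a) (hθ : 0 ≤ θ) :
    Tendsto (fun x : ℝ => (exp (-(θ * x ^ 2 / 2)) - 1) * x ^ (-a)) atTop (𝓝 0) := by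
  refine squeeze_zero_norm' ?_ (tendsto_rpow_neg_atTop ha0)
  filter_upwards [eventually_gt_atTop 0] with x hx
  exact abs_exp_neg_sq_sub_one_mul_rpow_le_rpow hθ hx _

lemma integral_rpow_mul_exp_neg_sq {s : ℝ} (hs : -1 < s) (hθ : 0 < θ) :
    ∫ x in Ioi 0, x ^ s * exp (-(θ * x ^ 2 / 2))
      = (θ / 2) ^ (-(s + 1) / 2) * (1 / 2) * Gamma ((s + 1) / 2) := by
  rw [← integral_rpow_mul_exp_neg_mul_rpow two_pos hs (half_pos hθ)]
  refine setIntegral_congr_fun measurableSet_Ioi fun x _ => ?_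
  rw [rpow_two]; ring_nf

lemma mul_integral_gaussTemperedKernel (ha0 : 0 < a) (ha2 : a < 2) (hθ : 0 < θ) :
    a * ∫ x in Ioi 0, gaussTemperedKernel a θ x
      = -θ * ∫ x in Ioi 0, x ^ (1 - a) * exp (-(θ * x ^ 2 / 2)) := by
  have hu : ∀ x ∈ Ioi (0 : ℝ), HasDerivAt (fun x => exp (-(θ * x ^ 2 / 2)) - 1)
      (-θ * x * exp (-(θ * x ^ 2 / 2))) x := fun x _ => by
    have h : HasDerivAt (fun x : ℝ => -(θ * x ^ 2 / 2)) (-θ * x) x :=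
      ((hasDerivAt_pow 2 x).const_mul θ |>.div_const 2).fun_neg.congr_deriv (by push_cast; ring)
    exact (h.exp.sub_const 1).congr_deriv (mul_comm _ _)
  have hv : ∀ x ∈ Ioi (0 : ℝ), HasDerivAt (fun x => x ^ (-a)) (-a * x ^ (-a - 1)) x :=
    fun x hx => hasDerivAt_rpow_const (Or.inl (ne_of_gt hx))
  have hu'v : ∀ x ∈ Ioi (0 : ℝ), -θ * x * exp (-(θ * x ^ 2 / 2)) * x ^ (-a)
      = -θ * (x ^ (1 - a) * exp (-(θ * x ^ 2 / 2))) := fun x hx => by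
    rw [sub_eq_add_neg, rpow_add hx, rpow_one]; ring
  have huv' : ∀ x ∈ Ioi (0 : ℝ), -a * gaussTemperedKernel a θ x
      = (exp (-(θ * x ^ 2 / 2)) - 1) * (-a * x ^ (-a - 1)) := fun x _ => by
    rw [gaussTemperedKernel]; ring
  have hmoment : IntegrableOn (fun x : ℝ => x ^ (1 - a) * exp (-(θ * x ^ 2 / 2))) (Ioi 0) := by
    simpa only [neg_mul, neg_div, mul_div_right_comm] using
      integrableOn_rpow_mul_exp_neg_mul_sq (half_pos hθ) (s := 1 - a) (by linarith)
  have hparts := integral_Ioi_mul_deriv_eq_deriv_mul hu hv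
    (IntegrableOn.congr_fun ((integrableOn_gaussTemperedKernel ha0 ha2 hθ.le).const_mul (-a))
      huv' measurableSet_Ioi)
    (IntegrableOn.congr_fun (hmoment.const_mul (-θ)) (fun x hx => (hu'v x hx).symm)
      measurableSet_Ioi)
    (tendsto_exp_neg_sq_sub_one_mul_rpow_nhdsGT_zero ha2 hθ.le)
    (tendsto_exp_neg_sq_sub_one_mul_rpow_atTop ha0 hθ.le)
  rw [← setIntegral_congr_fun measurableSet_Ioi huv', setIntegral_congr_fun measurableSet_Ioi hu'v,
    integral_const_mul, integral_const_mul] at hparts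
  linarith

lemma integral_gaussTemperedKernel (ha0 : 0 < a) (ha2 : a < 2) (hθ : 0 < θ) :
    ∫ x in Ioi 0, gaussTemperedKernel a θ x = 2 ^ (-1 - a / 2) * Gamma (-(a / 2)) * θ ^ (a / 2) := by
  have hGamma : Gamma (1 - a / 2) = -(a / 2) * Gamma (-(a / 2)) := by
    rw [← Gamma_add_one (by linarith), neg_add_eq_sub]
  have hparts := mul_integral_gaussTemperedKernel ha0 ha2 hθ
  rw [integral_rpow_mul_exp_neg_sq (by linarith) hθ, show (1 - a + 1) / 2 = 1 - a / 2 by ring,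
    hGamma, show -(1 - a + 1) / 2 = a / 2 - 1 by ring, rpow_sub (half_pos hθ), rpow_one,
    div_rpow hθ.le zero_le_two] at hparts
  rw [rpow_sub two_pos, rpow_neg_one]
  apply mul_left_cancel₀ ha0.ne'
  rw [hparts]
  field_simp

end Kernel

lemma integral_eq_integral_Ioi_add_integral_Ioi_comp_neg {E : Type*} [NormedAddCommGroup E]
    [NormedSpace ℝ E] {f : ℝ → E} (hpos : IntegrableOn f (Ioi 0))
    (hneg : IntegrableOn (fun x => f (-x)) (Ioi 0)) :
    ∫ x, f x = (∫ x in Ioi 0, f x) + ∫ x in Ioi 0, f (-x) := by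
  have hIic : IntegrableOn f (Iic 0) := by
    rw [integrableOn_Iic_iff_integrableOn_Iio,
      ← (Measure.measurePreserving_neg volume).integrableOn_comp_preimage
        (Homeomorph.neg ℝ).measurableEmbedding]
    simpa [Function.comp_def] using hneg
  rw [← intervalIntegral.integral_Iic_add_Ioi hIic hpos, integral_comp_neg_Ioi, neg_zero, add_comm]

noncomputable def gaussMixture (p q A B a x : ℝ) : ℝ :=
  (p * exp (-(A * x ^ 2 / 2)) + q * exp (-(B * x ^ 2 / 2))
    - exp (-((p * A + q * B) * x ^ 2 / 2))) * x ^ (-a - 1)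

section Mixture

variable {p q A B a : ℝ}

lemma gaussMixture_eq (hpq : p + q = 1) (x : ℝ) :
    gaussMixture p q A B a x = p * gaussTemperedKernel a A x + q * gaussTemperedKernel a B x
      - gaussTemperedKernel a (p * A + q * B) x := by
  simp only [gaussMixture, gaussTemperedKernel]
  linear_combination x ^ (-a - 1) * hpq

lemma integrableOn_gaussMixture (ha0 : 0 < a) (ha2 : a < 2) (hA : 0 ≤ A) (hB : 0 ≤ B)
    (hC : 0 ≤ p * A + q * B) (hpq : p + q = 1) :
    IntegrableOn (gaussMixture p q A B a) (Ioi 0) := by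
  simp_rw [funext (gaussMixture_eq hpq)]
  exact ((integrableOn_gaussTemperedKernel ha0 ha2 hA).const_mul p |>.add
    ((integrableOn_gaussTemperedKernel ha0 ha2 hB).const_mul q)).sub
    (integrableOn_gaussTemperedKernel ha0 ha2 hC)

lemma integral_gaussMixture (ha0 : 0 < a) (ha2 : a < 2) (hA : 0 < A) (hB : 0 < B)
    (hC : 0 < p * A + q * B) (hpq : p + q = 1) :
    ∫ x in Ioi 0, gaussMixture p q A B a x = 2 ^ (-1 - a / 2) * Gamma (-(a / 2))
      * (p * A ^ (a / 2) + q * B ^ (a / 2) - (p * A + q * B) ^ (a / 2)) := by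
  have hk {θ : ℝ} (hθ : 0 ≤ θ) := integrableOn_gaussTemperedKernel ha0 ha2 hθ
  simp_rw [gaussMixture_eq hpq]
  rw [integral_sub (((hk hA.le).const_mul p).fun_add ((hk hB.le).const_mul q)) (hk hC.le),
    integral_add ((hk hA.le).const_mul p) ((hk hB.le).const_mul q), integral_const_mul,
    integral_const_mul, integral_gaussTemperedKernel ha0 ha2 hA,
    integral_gaussTemperedKernel ha0 ha2 hB, integral_gaussTemperedKernel ha0 ha2 hC]
  ring

end Mixture

lemma alpha_integrand_mul_exp_neg_sq {p q : ℝ} (hpq : p + q = 1) (l m c y x : ℝ) :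
    (p * exp (-((l - m) * x ^ 2 / 2)) + q - exp (-((l - m) * x ^ 2 / 2)) ^ p)
        * (c * exp (-(m * x ^ 2 / 2)) * y)
      = c * ((p * exp (-(l * x ^ 2 / 2)) + q * exp (-(m * x ^ 2 / 2))
        - exp (-((p * l + q * m) * x ^ 2 / 2))) * y) := by
  rw [← exp_mul]
  have hl : exp (-((l - m) * x ^ 2 / 2)) * exp (-(m * x ^ 2 / 2)) = exp (-(l * x ^ 2 / 2)) := by
    rw [← exp_add]; ring_nf
  have htilt : exp (-((l - m) * x ^ 2 / 2) * p) * exp (-(m * x ^ 2 / 2))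
      = exp (-((p * l + q * m) * x ^ 2 / 2)) := by
    rw [← exp_add]; congr 1; linear_combination (x ^ 2 * m / 2) * hpq
  linear_combination (p * c * y) * hl - (c * y) * htilt

lemma mul_rdtsDensity_of_pos {p q : ℝ} (hpq : p + q = 1) (ap am Cp Cm l mp mm : ℝ) {x : ℝ}
    (hx : 0 < x) :
    (p * exp (-((l - mp) * x ^ 2 / 2)) + q - exp (-((l - mp) * x ^ 2 / 2)) ^ p)
        * rdtsDensity ap am Cp Cm mp mm x
      = Cp * gaussMixture p q l mp ap x := by
  rw [rdtsDensity, if_pos hx, alpha_integrand_mul_exp_neg_sq hpq, gaussMixture]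

lemma mul_rdtsDensity_neg_of_pos {p q : ℝ} (hpq : p + q = 1) (ap am Cp Cm l mp mm : ℝ) {x : ℝ}
    (hx : 0 < x) :
    (p * exp (-((l - mm) * x ^ 2 / 2)) + q - exp (-((l - mm) * x ^ 2 / 2)) ^ p)
        * rdtsDensity ap am Cp Cm mp mm (-x)
      = Cm * gaussMixture p q l mm am x := by
  have hx' : -x < 0 := neg_lt_zero.2 hx
  rw [rdtsDensity, if_neg hx'.not_gt, if_pos hx', neg_sq, abs_neg, abs_of_pos hx,
    alpha_integrand_mul_exp_neg_sq hpq, gaussMixture]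

theorem rdts_alpha_divergence_general (ap am Cp Cm lp lm mp mm T α p q : ℝ)
    (hap : ap ∈ Ioo (0:ℝ) 2)
    (ham : am ∈ Ioo (0:ℝ) 2)
    (hlp : 0 < lp) (hlm : 0 < lm)
    (hmp : 0 < mp) (hmm : 0 < mm) (hα : α ∈ Ioo (-1:ℝ) 1)
    (hp : p = (1 - α) / 2) (hq : q = (1 + α) / 2)
    (r : ℝ → ℝ)
    (hrp : ∀ x : ℝ, 0 < x → r x = exp (-((lp - mp) * x ^ 2 / 2)))
    (hrm : ∀ x : ℝ, x < 0 → r x = exp (-((lm - mm) * x ^ 2 / 2))) :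
    (4 * T / (1 - α ^ 2)) *
        ∫ x : ℝ, (p * r x + q - r x ^ p) * rdtsDensity ap am Cp Cm mp mm x
      = (4 * T / (1 - α ^ 2)) *
        ((2:ℝ) ^ (-1 - ap / 2) * Cp * Gamma (-(ap / 2)) *
            (p * lp ^ (ap / 2) + q * mp ^ (ap / 2) - (p * lp + q * mp) ^ (ap / 2))
          + (2:ℝ) ^ (-1 - am / 2) * Cm * Gamma (-(am / 2)) *
            (p * lm ^ (am / 2) + q * mm ^ (am / 2) - (p * lm + q * mm) ^ (am / 2))) := by
  have hp0 : 0 < p := by rw [hp]; linarith [hα.2]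
  have hq0 : 0 < q := by rw [hq]; linarith [hα.1]
  have hpq : p + q = 1 := by rw [hp, hq]; ring
  have hCp : 0 < p * lp + q * mp := by positivity
  have hCm : 0 < p * lm + q * mm := by positivity
  have hpos : ∀ x ∈ Ioi (0 : ℝ), (p * r x + q - r x ^ p) * rdtsDensity ap am Cp Cm mp mm x
      = Cp * gaussMixture p q lp mp ap x := fun x (hx : 0 < x) => by
    rw [hrp x hx, mul_rdtsDensity_of_pos hpq _ _ _ _ _ _ _ hx]
  have hneg : ∀ x ∈ Ioi (0 : ℝ), (p * r (-x) + q - r (-x) ^ p) * rdtsDensity ap am Cp Cm mp mm (-x)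
      = Cm * gaussMixture p q lm mm am x := fun x (hx : 0 < x) => by
    rw [hrm _ (neg_lt_zero.2 hx), neg_sq, mul_rdtsDensity_neg_of_pos hpq _ _ _ _ _ _ _ hx]
  congr 1
  rw [integral_eq_integral_Ioi_add_integral_Ioi_comp_neg
      (IntegrableOn.congr_fun
        ((integrableOn_gaussMixture hap.1 hap.2 hlp.le hmp.le hCp.le hpq).const_mul Cp)
        (fun x hx => (hpos x hx).symm) measurableSet_Ioi)
      (IntegrableOn.congr_fun
        ((integrableOn_gaussMixture ham.1 ham.2 hlm.le hmm.le hCm.le hpq).const_mul Cm)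
        (fun x hx => (hneg x hx).symm) measurableSet_Ioi),
    setIntegral_congr_fun measurableSet_Ioi hpos, setIntegral_congr_fun measurableSet_Ioi hneg,
    integral_const_mul, integral_const_mul,
    integral_gaussMixture hap.1 hap.2 hlp hmp hCp hpq,
    integral_gaussMixture ham.1 ham.2 hlm hmm hCm hpq]
  ring

/-- α-divergence (α ≠ ±1) between two equivalent-martingale RDTS processes. -/
theorem rdts_alpha_divergence (ap am Cp Cm lp lm mp mm T α p q : ℝ)
    (hap : ap ∈ Ioo (0:ℝ) 2) (hap1 : ap ≠ 1)
    (ham : am ∈ Ioo (0:ℝ) 2) (ham1 : am ≠ 1)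
    (hCp : 0 < Cp) (hCm : 0 < Cm) (hlp : 0 < lp) (hlm : 0 < lm)
    (hmp : 0 < mp) (hmm : 0 < mm) (hT : 0 < T) (hα : α ∈ Ioo (-1:ℝ) 1)
    (hp : p = (1 - α) / 2) (hq : q = (1 + α) / 2)
    (r : ℝ → ℝ)
    (hrp : ∀ x : ℝ, 0 < x → r x = exp (-((lp - mp) * x ^ 2 / 2)))
    (hrm : ∀ x : ℝ, x < 0 → r x = exp (-((lm - mm) * x ^ 2 / 2))) :
    (4 * T / (1 - α ^ 2)) *
        ∫ x : ℝ, (p * r x + q - r x ^ p) * rdtsDensity ap am Cp Cm mp mm x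
      = (4 * T / (1 - α ^ 2)) *
        ((2:ℝ) ^ (-1 - ap / 2) * Cp * Gamma (-(ap / 2)) *
            (p * lp ^ (ap / 2) + q * mp ^ (ap / 2) - (p * lp + q * mp) ^ (ap / 2))
          + (2:ℝ) ^ (-1 - am / 2) * Cm * Gamma (-(am / 2)) *
            (p * lm ^ (am / 2) + q * mm ^ (am / 2) - (p * lm + q * mm) ^ (am / 2))) :=
  rdts_alpha_divergence_general ap am Cp Cm lp lm mp mm T α p q hap ham hlp hlm hmp hmm hα hp hq r
    hrp hrm
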